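/- arXiv:2005.14266 — 2 statements merged into one kernel-verified Lean document; each statement's English description precedes it below -/
import Mathlib

section
/- Mass conservation for the mass–energy conservative (MEC) scheme with discretized multiplicative noise: let Δt > 0, ε ∈ ℝ, let f̃_0, …, f̃_N be real numbers, let σ ≥ 1 be an integer, and let u⁰, u¹ ∈ ℂ^{N+1}. Assume there exist real numbers V_0, …, V_N such that V_j·(|u¹_j|² − |u⁰_j|²) = (1/(σ+1))·(|u¹_j|^{2(σ+1)} − |u⁰_j|^{2(σ+1)}) for every 0 ≤ j ≤ N, and that for every 0 ≤ j ≤ N one has i·(u¹_j − u⁰_j)/Δt + D₂u^{1/2}_j + V_j·u^{1/2}_j = ε·f̃_j·u^{1/2}_j, where u^{1/2}_j := (u⁰_j + u¹_j)/2 (extended by the Neumann conventions). Then M_dis[u¹] = M_dis[u⁰]. -/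
open Finset

/-- Extended mesh size `Δx_j` for `j ∈ {-1, 0, …, N}`, with the conventions
`Δx_{-1} := Δx_0` and `Δx_N := Δx_{N-1}`. -/
noncomputable def meshDx (N : ℕ) (x : ℕ → ℝ) (j : ℤ) : ℝ :=
  if j ≤ 0 then x 1 - x 0
  else if (N : ℤ) ≤ j then x N - x (N - 1)
  else x (j.toNat + 1) - x j.toNat

/-- Neumann extension of a vector `u ∈ ℂ^{N+1}`: `u_{-1} := u_0`, `u_{N+1} := u_N`. -/
noncomputable def neumannExt (N : ℕ) (u : ℕ → ℂ) (j : ℤ) : ℂ :=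
  if j ≤ 0 then u 0
  else if (N : ℤ) ≤ j then u N
  else u j.toNat

/-- Discrete second-difference operator on the (possibly non-uniform) mesh. -/
noncomputable def D2 (N : ℕ) (x : ℕ → ℝ) (u : ℕ → ℂ) (j : ℕ) : ℂ :=
  2 * neumannExt N u ((j : ℤ) - 1) /
      ((meshDx N x ((j : ℤ) - 1) : ℂ) * ((meshDx N x ((j : ℤ) - 1) : ℂ) + (meshDx N x (j : ℤ) : ℂ)))
    - 2 * neumannExt N u (j : ℤ) / ((meshDx N x ((j : ℤ) - 1) : ℂ) * (meshDx N x (j : ℤ) : ℂ))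
    + 2 * neumannExt N u ((j : ℤ) + 1) /
      (((meshDx N x ((j : ℤ) - 1) : ℂ) + (meshDx N x (j : ℤ) : ℂ)) * (meshDx N x (j : ℤ) : ℂ))

/-- Discrete mass `M_dis[u] = (1/2)·Σ_{j=0}^{N} |u_j|²·(Δx_j + Δx_{j-1})`. -/
noncomputable def Mdis (N : ℕ) (x : ℕ → ℝ) (u : ℕ → ℂ) : ℝ :=
  (1 / 2) * ∑ j ∈ Finset.range (N + 1),
    ‖u j‖ ^ 2 * (meshDx N x (j : ℤ) + meshDx N x ((j : ℤ) - 1))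

/-!
Pair the scheme at node `j` with `conj w_j`, `w = (u⁰ + u¹)/2`, weight it by the dual cell width
and sum over `j`. The potential and noise terms are real, and the `D₂` term is real too: `D₂` is in
conservation form, so summation by parts against the Neumann boundary turns it into
`-∑ |w_{j+1} - w_j|² / Δx_j`. The imaginary part of what remains,
`(M_dis[u¹] - M_dis[u⁰]) / (2 Δt)`, must therefore vanish.
-/

noncomputable def dualMeshDx (N : ℕ) (x : ℕ → ℝ) (j : ℕ) : ℝ :=
  (meshDx N x j + meshDx N x ((j : ℤ) - 1)) / 2

noncomputable def discreteFlux (N : ℕ) (x : ℕ → ℝ) (u : ℕ → ℂ) (j : ℤ) : ℂ :=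
  (neumannExt N u (j + 1) - neumannExt N u j) / meshDx N x j

theorem Mdis_eq_sum_dualMeshDx (N : ℕ) (x : ℕ → ℝ) (u : ℕ → ℂ) :
    Mdis N x u = ∑ j ∈ range (N + 1), dualMeshDx N x j * ‖u j‖ ^ 2 := by
  rw [Mdis, mul_sum]
  refine sum_congr rfl fun j _ => ?_
  rw [dualMeshDx]
  ring

theorem meshDx_pos {N : ℕ} (hN : 1 ≤ N) {x : ℕ → ℝ} (hx : ∀ j, j < N → x j < x (j + 1))
    (j : ℤ) : 0 < meshDx N x j := by
  unfold meshDx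
  split_ifs with h0 hN'
  · exact sub_pos.mpr (hx 0 hN)
  · have := hx (N - 1) (by omega)
    rw [Nat.sub_add_cancel hN] at this
    exact sub_pos.mpr this
  · exact sub_pos.mpr (hx j.toNat (by omega))

theorem neumannExt_natCast {N : ℕ} (u : ℕ → ℂ) {j : ℕ} (hj : j ≤ N) :
    neumannExt N u j = u j := by
  unfold neumannExt
  split_ifs with h0 hN
  · rw [show j = 0 by omega]
  · rw [show j = N by omega]
  · rfl

theorem discreteFlux_neg_one (N : ℕ) (x : ℕ → ℝ) (u : ℕ → ℂ) : discreteFlux N x u (-1) = 0 := by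
  simp [discreteFlux, neumannExt]

theorem discreteFlux_natCast_self (N : ℕ) (x : ℕ → ℝ) (u : ℕ → ℂ) :
    discreteFlux N x u N = 0 := by
  have hlast : neumannExt N u (N + 1) = u N := by
    rw [neumannExt, if_neg (by omega), if_pos (by omega)]
  rw [discreteFlux, hlast, neumannExt_natCast u le_rfl, sub_self, zero_div]

theorem dualMeshDx_mul_D2 {N : ℕ} (hN : 1 ≤ N) {x : ℕ → ℝ}
    (hx : ∀ j, j < N → x j < x (j + 1)) (u : ℕ → ℂ) (j : ℕ) :
    (dualMeshDx N x j : ℂ) * D2 N x u j = discreteFlux N x u j - discreteFlux N x u (j - 1) := by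
  have ha : (meshDx N x ((j : ℤ) - 1) : ℂ) ≠ 0 := by exact_mod_cast (meshDx_pos hN hx _).ne'
  have hb : (meshDx N x j : ℂ) ≠ 0 := by exact_mod_cast (meshDx_pos hN hx _).ne'
  have hab : (meshDx N x ((j : ℤ) - 1) : ℂ) + meshDx N x j ≠ 0 := by
    exact_mod_cast (add_pos (meshDx_pos hN hx _) (meshDx_pos hN hx _)).ne'
  rw [dualMeshDx, D2, discreteFlux, discreteFlux, sub_add_cancel]
  push_cast
  field_simp
  ring

theorem sum_range_mul_sub_shift {R : Type*} [CommRing R] (g F : ℤ → R) (hF : F (-1) = 0)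
    (n : ℕ) :
    ∑ j ∈ range (n + 1), g j * (F j - F (j - 1))
      = g n * F n - ∑ j ∈ range n, (g (j + 1) - g j) * F j := by
  induction n with
  | zero => simp [hF]
  | succ n ih =>
    rw [sum_range_succ, ih, sum_range_succ]
    push_cast
    rw [add_sub_cancel_right]
    ring

theorem im_conj_sub_mul_sub_div_ofReal (a b : ℂ) (r : ℝ) :
    ((starRingEnd ℂ a - starRingEnd ℂ b) * ((a - b) / r)).im = 0 := by
  rw [← map_sub, mul_div_assoc', Complex.conj_mul', ← Complex.ofReal_pow, ← Complex.ofReal_div,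
    Complex.ofReal_im]

theorem sum_dualMeshDx_mul_im_conj_mul_D2 {N : ℕ} (hN : 1 ≤ N) {x : ℕ → ℝ}
    (hx : ∀ j, j < N → x j < x (j + 1)) (u : ℕ → ℂ) :
    ∑ j ∈ range (N + 1), dualMeshDx N x j * (starRingEnd ℂ (u j) * D2 N x u j).im = 0 := by
  have hsum : ∑ j ∈ range (N + 1), dualMeshDx N x j * (starRingEnd ℂ (u j) * D2 N x u j).im
      = (∑ j ∈ range (N + 1), starRingEnd ℂ (neumannExt N u j) *
          (discreteFlux N x u j - discreteFlux N x u (j - 1))).im := by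
    rw [Complex.im_sum]
    refine sum_congr rfl fun j hj => ?_
    rw [neumannExt_natCast u (mem_range_succ_iff.mp hj),
      ← dualMeshDx_mul_D2 hN hx, ← Complex.im_ofReal_mul, mul_left_comm]
  rw [hsum, sum_range_mul_sub_shift (fun j => starRingEnd ℂ (neumannExt N u j)) _
      (discreteFlux_neg_one N x u), discreteFlux_natCast_self,
    mul_zero, zero_sub, Complex.neg_im, Complex.im_sum, neg_eq_zero]
  exact sum_eq_zero fun j _ => im_conj_sub_mul_sub_div_ofReal _ _ _

theorem im_conj_midpoint_mul_of_scheme {a b D : ℂ} {Δt V c : ℝ}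
    (h : Complex.I * (b - a) / Δt + D + V * ((a + b) / 2) = c * ((a + b) / 2)) :
    (starRingEnd ℂ ((a + b) / 2) * D).im = -((‖b‖ ^ 2 - ‖a‖ ^ 2) / (2 * Δt)) := by
  rw [eq_sub_of_add_eq' (eq_sub_of_add_eq h), div_eq_mul_inv _ (Δt : ℂ), ← Complex.ofReal_inv]
  simp only [Complex.sq_norm, Complex.normSq_apply, Complex.mul_im, Complex.mul_re,
    Complex.sub_im, Complex.sub_re, Complex.add_im, Complex.add_re, Complex.div_ofNat_im,
    Complex.div_ofNat_re, Complex.I_re, Complex.I_im, Complex.ofReal_re, Complex.ofReal_im,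
    Complex.conj_re, Complex.conj_im]
  ring

theorem mec_scheme_mass_conservation_general
    (N : ℕ) (hN : 1 ≤ N) (x : ℕ → ℝ) (hx : ∀ j, j < N → x j < x (j + 1))
    (Δt : ℝ) (hΔt : 0 < Δt) (ε : ℝ) (ftilde : ℕ → ℝ)
    (u0 u1 : ℕ → ℂ) (V : ℕ → ℝ)
    (hscheme : ∀ j ≤ N,
      Complex.I * (u1 j - u0 j) / (Δt : ℂ)
        + D2 N x (fun k => (u0 k + u1 k) / 2) j
        + (V j : ℂ) * ((u0 j + u1 j) / 2)
      = (ε : ℂ) * (ftilde j : ℂ) * ((u0 j + u1 j) / 2)) :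
    Mdis N x u1 = Mdis N x u0 := by
  set w : ℕ → ℂ := fun k => (u0 k + u1 k) / 2
  have hpair : ∀ j ∈ range (N + 1), (starRingEnd ℂ (w j) * D2 N x w j).im
      = -((‖u1 j‖ ^ 2 - ‖u0 j‖ ^ 2) / (2 * Δt)) := fun j hj =>
    im_conj_midpoint_mul_of_scheme (c := ε * ftilde j) (by
      push_cast
      exact hscheme j (mem_range_succ_iff.mp hj))
  have hbalance : ∑ j ∈ range (N + 1), dualMeshDx N x j * (‖u1 j‖ ^ 2 - ‖u0 j‖ ^ 2) = 0 :=
    calc _ = -(2 * Δt) * ∑ j ∈ range (N + 1),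
            dualMeshDx N x j * (starRingEnd ℂ (w j) * D2 N x w j).im := by
          rw [mul_sum]
          refine sum_congr rfl fun j hj => ?_
          rw [hpair j hj]
          field_simp [hΔt.ne']
      _ = 0 := by rw [sum_dualMeshDx_mul_im_conj_mul_D2 hN hx w, mul_zero]
  rw [Mdis_eq_sum_dualMeshDx, Mdis_eq_sum_dualMeshDx, ← sub_eq_zero, ← sum_sub_distrib]
  simpa only [mul_sub] using hbalance

/-- Mass conservation for the mass–energy conservative (MEC) scheme with discretized
multiplicative noise. -/
theorem mec_scheme_mass_conservation
    (N : ℕ) (hN : 1 ≤ N) (x : ℕ → ℝ) (hx : ∀ j, j < N → x j < x (j + 1))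
    (Δt : ℝ) (hΔt : 0 < Δt) (ε : ℝ) (ftilde : ℕ → ℝ)
    (σ : ℕ) (hσ : 1 ≤ σ) (u0 u1 : ℕ → ℂ) (V : ℕ → ℝ)
    (hV : ∀ j ≤ N, V j * (‖u1 j‖ ^ 2 - ‖u0 j‖ ^ 2)
      = (1 / ((σ : ℝ) + 1)) * (‖u1 j‖ ^ (2 * (σ + 1)) - ‖u0 j‖ ^ (2 * (σ + 1))))
    (hscheme : ∀ j ≤ N,
      Complex.I * (u1 j - u0 j) / (Δt : ℂ)
        + D2 N x (fun k => (u0 k + u1 k) / 2) j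
        + (V j : ℂ) * ((u0 j + u1 j) / 2)
      = (ε : ℂ) * (ftilde j : ℂ) * ((u0 j + u1 j) / 2)) :
    Mdis N x u1 = Mdis N x u0 :=
  mec_scheme_mass_conservation_general N hN x hx Δt hΔt ε ftilde u0 u1 V hscheme
end

section
/- Loss of mass under linear midpoint interpolation: let Δx_{j−1}, Δx_j, Δx_{j+1} > 0 and u_j, u_{j+1} ∈ ℂ, and set u_{j+1/2} := (u_j + u_{j+1})/2. With M_j := (1/4)·[ |u_j|²·(Δx_j + Δx_{j−1}) + |u_{j+1}|²·(Δx_{j+1} + Δx_j) ] and M̃_j := (1/4)·[ |u_j|²·((1/2)Δx_j + Δx_{j−1}) + |u_{j+1/2}|²·Δx_j + |u_{j+1}|²·((1/2)Δx_j + Δx_{j+1}) ], one has M_j − M̃_j = (1/16)·|u_j − u_{j+1}|²·Δx_j; in particular M̃_j ≤ M_j, with strict inequality whenever u_j ≠ u_{j+1}, so the linear interpolation strictly loses discrete mass unless the two neighboring values coincide. -/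
/-- Loss of mass under linear midpoint interpolation: with `u_{j+1/2} = (u_j + u_{j+1})/2`,
`M_j − M̃_j = (1/16)·|u_j − u_{j+1}|²·Δx_j`; in particular `M̃_j ≤ M_j`, with strict
inequality whenever `u_j ≠ u_{j+1}`. -/
theorem linear_interpolation_mass_loss
    (dxm dx dxp : ℝ) (hdxm : 0 < dxm) (hdx : 0 < dx) (hdxp : 0 < dxp)
    (uj ujp : ℂ) :
    (1 / 4) * (‖uj‖ ^ 2 * (dx + dxm) + ‖ujp‖ ^ 2 * (dxp + dx))
        - (1 / 4) * (‖uj‖ ^ 2 * ((1 / 2) * dx + dxm) + ‖(uj + ujp) / 2‖ ^ 2 * dx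
            + ‖ujp‖ ^ 2 * ((1 / 2) * dx + dxp))
      = (1 / 16) * ‖uj - ujp‖ ^ 2 * dx ∧
    (1 / 4) * (‖uj‖ ^ 2 * ((1 / 2) * dx + dxm) + ‖(uj + ujp) / 2‖ ^ 2 * dx
        + ‖ujp‖ ^ 2 * ((1 / 2) * dx + dxp))
      ≤ (1 / 4) * (‖uj‖ ^ 2 * (dx + dxm) + ‖ujp‖ ^ 2 * (dxp + dx)) ∧
    (uj ≠ ujp →
      (1 / 4) * (‖uj‖ ^ 2 * ((1 / 2) * dx + dxm) + ‖(uj + ujp) / 2‖ ^ 2 * dx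
          + ‖ujp‖ ^ 2 * ((1 / 2) * dx + dxp))
        < (1 / 4) * (‖uj‖ ^ 2 * (dx + dxm) + ‖ujp‖ ^ 2 * (dxp + dx))) := by
  have key : ‖(uj + ujp) / 2‖ ^ 2 = (‖uj‖ ^ 2 + ‖ujp‖ ^ 2) / 2 - ‖uj - ujp‖ ^ 2 / 4 := by
    have h := norm_add_sq_real uj ujp
    have h2 := norm_sub_sq_real uj ujp
    have : ‖(uj + ujp) / 2‖ = ‖uj + ujp‖ / 2 := by
      rw [show ((2:ℂ)) = ((2:ℝ):ℂ) by norm_num] at *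
      simp [div_eq_mul_inv, norm_mul]
    rw [this]
    nlinarith [norm_nonneg (uj+ujp)]
  have heq : (1 / 4) * (‖uj‖ ^ 2 * (dx + dxm) + ‖ujp‖ ^ 2 * (dxp + dx))
        - (1 / 4) * (‖uj‖ ^ 2 * ((1 / 2) * dx + dxm) + ‖(uj + ujp) / 2‖ ^ 2 * dx
            + ‖ujp‖ ^ 2 * ((1 / 2) * dx + dxp))
      = (1 / 16) * ‖uj - ujp‖ ^ 2 * dx := by
    rw [key]; ring
  refine ⟨heq, ?_, ?_⟩
  · nlinarith [sq_nonneg ‖uj - ujp‖, hdx.le]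
  · intro hne
    have hpos : 0 < ‖uj - ujp‖ ^ 2 := by
      have : uj - ujp ≠ 0 := sub_ne_zero.mpr hne
      exact pow_pos (norm_pos_iff.mpr this) 2
    nlinarith
end
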